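/- arXiv:1912.07722 — 6 statements merged into one kernel-verified Lean document; each statement's English description precedes it below -/
import Mathlib

section
/- Let G be a tournament on n vertices containing fewer than k! transitive subtournaments on k vertices. Then there exists a linear ordering π of the vertices such that the 'forward' graph G_π (with edges those oriented forwards under π) has independence number less than k, and hence chromatic number at least n/k. -/
/-- The graph of edges of the tournament `r` oriented forwards according to the ordering `π`. -/
def forwardGraph {n : ℕ} (r : Fin n → Fin n → Prop) (π : Equiv.Perm (Fin n)) :
    SimpleGraph (Fin n) where
  Adj u v := (π u < π v ∧ r u v) ∨ (π v < π u ∧ r v u)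
  symm := ⟨by intro u v h; tauto⟩
  loopless := ⟨by intro v h; rcases h with ⟨h, -⟩ | ⟨h, -⟩ <;> exact lt_irrefl _ h⟩

/-- `S` induces a transitive (acyclic) subtournament of `r`. -/
def TransitiveOn {n : ℕ} (r : Fin n → Fin n → Prop) (S : Finset (Fin n)) : Prop :=
  ∀ v, ¬ Relation.TransGen (fun a b => a ∈ S ∧ b ∈ S ∧ r a b) v v

/-! Double count the pairs `(π, S)` where `S` is a `k`-set independent in `G_π`. Such an `S` is
transitive, and `π` must list it in the reverse of its tournament order; two orderings doing so
for the same `S` never differ by a permutation of `S`, so each `S` is independent for at most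
`n! / k!` orderings, one per coset of `Sym(S)`. With fewer than `k!` transitive `k`-sets there are
fewer than `n!` pairs, so some `π` has no independent `k`-set, and then every colour class of a
colouring of `G_π` has fewer than `k` vertices. -/

open Finset

theorem Equiv.Perm.eq_one_of_lt_iff_lt {α β : Type*} [Finite α] [LinearOrder β] {f : α → β}
    (hf : Function.Injective f) {τ : Equiv.Perm α} (hτ : ∀ u v, f (τ u) < f (τ v) ↔ f u < f v) :
    τ = 1 := by
  let : LinearOrder α := LinearOrder.lift' f hf
  have : WellFoundedLT α := Finite.to_wellFoundedLT
  let e : α ≃o α :=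
    { τ with
      map_rel_iff' := fun {a b} => by
        change f (τ a) ≤ f (τ b) ↔ f a ≤ f b
        simp only [← not_lt, hτ] }
  ext x
  exact DFunLike.congr_fun (Subsingleton.elim e (OrderIso.refl α)) x

theorem SimpleGraph.card_le_mul_chromaticNumber {V : Type*} [Fintype V] (G : SimpleGraph V)
    {k : ℕ} (h : ∀ s : Finset V, G.IsIndepSet s → #s ≤ k) :
    (Fintype.card V : ℕ∞) ≤ k * G.chromaticNumber := by
  classical
  have hχ : G.chromaticNumber ≠ ⊤ :=
    chromaticNumber_ne_top_iff_exists.2 ⟨_, G.colorable_of_fintype⟩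
  obtain ⟨C⟩ := G.colorable_chromaticNumber_of_fintype
  rw [← ENat.natCast_toNat hχ]
  norm_cast
  simpa using card_le_mul_card_image_of_maps_to (s := univ) (t := univ) (f := C)
    (fun _ _ => mem_univ _) k fun c _ => h _ <| by
      convert C.isIndepSet_colorClass c using 1
      ext
      simp [Coloring.colorClass]

section Tournament

variable {n : ℕ} {r : Fin n → Fin n → Prop}

theorem lt_iff_of_isIndepSet_forwardGraph (htour : ∀ u v, u ≠ v → (r u v ↔ ¬ r v u))
    {π : Equiv.Perm (Fin n)} {S : Set (Fin n)} (hS : (forwardGraph r π).IsIndepSet S)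
    {u v : Fin n} (hu : u ∈ S) (hv : v ∈ S) (huv : u ≠ v) : π u < π v ↔ r v u := by
  have hadj : ¬ (forwardGraph r π).Adj u v := hS hu hv huv
  have hπ : π u ≠ π v := π.injective.ne huv
  simp only [forwardGraph, not_or, not_and] at hadj
  rw [htour v u huv.symm]
  refine ⟨hadj.1, fun hr => ?_⟩
  by_contra hlt
  exact hadj.2 (by omega) ((htour v u huv.symm).2 hr)

theorem transitiveOn_of_isIndepSet_forwardGraph (hirr : ∀ v, ¬ r v v)
    {π : Equiv.Perm (Fin n)} {S : Finset (Fin n)} (hS : (forwardGraph r π).IsIndepSet S) :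
    TransitiveOn r S := by
  have hback : ∀ a b, (a ∈ S ∧ b ∈ S ∧ r a b) → π b < π a := by
    rintro a b ⟨ha, hb, hr⟩
    have hab : a ≠ b := by rintro rfl; exact hirr a hr
    have hadj : ¬ (forwardGraph r π).Adj a b := hS ha hb hab
    have hπ : π a ≠ π b := π.injective.ne hab
    simp only [forwardGraph, not_or, not_and] at hadj
    have hnlt : ¬ π a < π b := fun hlt => hadj.1 hlt hr
    omega
  intro v hv
  have hlift := hv.lift (p := GT.gt) π hback
  rw [Relation.transGen_eq_self] at hlift
  exact lt_irrefl _ hlift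

theorem eq_of_isIndepSet_forwardGraph (htour : ∀ u v, u ≠ v → (r u v ↔ ¬ r v u))
    {S : Finset (Fin n)} {π₁ π₂ : Equiv.Perm (Fin n)}
    (h₁ : (forwardGraph r π₁).IsIndepSet S) (h₂ : (forwardGraph r π₂).IsIndepSet S)
    (h : π₁⁻¹ * π₂ ∈ (Equiv.Perm.ofSubtype : Equiv.Perm S →* Equiv.Perm (Fin n)).range) :
    π₁ = π₂ := by
  obtain ⟨τ, hτ⟩ := h
  have hπ₂ : π₂ = π₁ * Equiv.Perm.ofSubtype τ := by rw [hτ, mul_inv_cancel_left]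
  have hval : ∀ u : S, π₂ u = π₁ (τ u) := fun u => by
    rw [hπ₂, Equiv.Perm.mul_apply, Equiv.Perm.ofSubtype_apply_of_mem τ u.2]
  have hτ1 : τ = 1 := by
    refine Equiv.Perm.eq_one_of_lt_iff_lt (f := fun u : S => π₁ u)
      (π₁.injective.comp Subtype.val_injective) fun u v => ?_
    rcases eq_or_ne u v with rfl | huv
    · simp
    have huv' : (u : Fin n) ≠ v := Subtype.val_injective.ne huv
    rw [← hval, ← hval, lt_iff_of_isIndepSet_forwardGraph htour h₂ u.2 v.2 huv',
      lt_iff_of_isIndepSet_forwardGraph htour h₁ u.2 v.2 huv']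
  rw [hπ₂, hτ1, map_one, mul_one]

open Classical in
theorem card_isIndepSet_forwardGraph_mul_factorial_le
    (htour : ∀ u v, u ≠ v → (r u v ↔ ¬ r v u)) (S : Finset (Fin n)) :
    #{π : Equiv.Perm (Fin n) | (forwardGraph r π).IsIndepSet S} * (#S).factorial
      ≤ n.factorial := by
  let H := (Equiv.Perm.ofSubtype : Equiv.Perm S →* Equiv.Perm (Fin n)).range
  have hH : Nat.card H = (#S).factorial := by
    rw [← Nat.card_congr (MonoidHom.ofInjective Equiv.Perm.ofSubtype_injective).toEquiv,
      Nat.card_perm, Nat.card_eq_fintype_card, Fintype.card_coe]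
  have hindex : #{π : Equiv.Perm (Fin n) | (forwardGraph r π).IsIndepSet S} ≤ H.index := by
    rw [Subgroup.index, Nat.card_eq_fintype_card, ← card_univ]
    exact card_le_card_of_injOn (QuotientGroup.mk : _ → _ ⧸ H) (fun _ _ => mem_univ _)
      fun π₁ h₁ π₂ h₂ heq => eq_of_isIndepSet_forwardGraph htour (mem_filter.1 h₁).2
        (mem_filter.1 h₂).2 (QuotientGroup.eq.1 heq)
  calc _ ≤ H.index * Nat.card H := by rw [hH]; gcongr
    _ = n.factorial := by rw [H.index_mul_card, Nat.card_perm, Nat.card_fin]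

theorem exists_perm_forall_isIndepSet_forwardGraph_card_lt {k : ℕ} (hirr : ∀ v, ¬ r v v)
    (htour : ∀ u v, u ≠ v → (r u v ↔ ¬ r v u))
    (hfew : Nat.card {S : Finset (Fin n) // S.card = k ∧ TransitiveOn r S} < k.factorial) :
    ∃ π : Equiv.Perm (Fin n), ∀ S : Finset (Fin n), (forwardGraph r π).IsIndepSet S → #S < k := by
  classical
  set T : Finset (Finset (Fin n)) := {S | #S = k ∧ TransitiveOn r S}
  have hT : #T < k.factorial := by
    rwa [Nat.card_eq_fintype_card, Fintype.card_subtype] at hfew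
  let R : Equiv.Perm (Fin n) → Finset (Fin n) → Prop :=
    fun π S => (forwardGraph r π).IsIndepSet S
  by_contra! hbad
  have hcover : ∀ π, 1 ≤ #(T.bipartiteAbove R π) := by
    intro π
    obtain ⟨S, hS, hk⟩ := hbad π
    obtain ⟨S', hS'S, hS'k⟩ := exists_subset_card_eq hk
    have hS' : R π S' := hS.mono (coe_subset.2 hS'S)
    exact card_pos.2 ⟨S', mem_filter.2 ⟨mem_filter.2 ⟨mem_univ _, hS'k,
      transitiveOn_of_isIndepSet_forwardGraph hirr hS'⟩, hS'⟩⟩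
  have hcount := calc n.factorial * k.factorial
      = (∑ _π : Equiv.Perm (Fin n), 1) * k.factorial := by simp [Fintype.card_perm]
    _ ≤ (∑ π, #(T.bipartiteAbove R π)) * k.factorial := by gcongr with π; exact hcover π
    _ = ∑ S ∈ T, #(univ.bipartiteBelow R S) * k.factorial := by
      rw [sum_card_bipartiteAbove_eq_sum_card_bipartiteBelow, sum_mul]
    _ ≤ ∑ _S ∈ T, n.factorial := sum_le_sum fun S hS =>
      (mem_filter.1 hS).2.1 ▸ card_isIndepSet_forwardGraph_mul_factorial_le htour S
    _ = #T * n.factorial := sum_const_nat fun _ _ => rfl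
    _ < n.factorial * k.factorial := by rw [mul_comm]; gcongr
  exact lt_irrefl _ hcount

end Tournament

theorem stmt2 {n k : ℕ} (r : Fin n → Fin n → Prop)
    (hirr : ∀ v, ¬ r v v) (htour : ∀ u v, u ≠ v → (r u v ↔ ¬ r v u))
    (hfew : Nat.card {S : Finset (Fin n) // S.card = k ∧ TransitiveOn r S} < k.factorial) :
    ∃ π : Equiv.Perm (Fin n),
      (∀ S : Finset (Fin n),
        (∀ u ∈ S, ∀ v ∈ S, ¬ (forwardGraph r π).Adj u v) → S.card < k) ∧
      (n : ℕ∞) ≤ (k : ℕ∞) * (forwardGraph r π).chromaticNumber := by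
  obtain ⟨π, hπ⟩ := exists_perm_forall_isIndepSet_forwardGraph_card_lt hirr htour hfew
  refine ⟨π, fun S hS => hπ S fun u hu v hv _ => hS u hu v hv, ?_⟩
  simpa using (forwardGraph r π).card_le_mul_chromaticNumber fun S hS => (hπ S hS).le
end

section
/- Start with the trivial partition of {1,...,n} into one part. Iteratively, at each step take a part A of maximum size and split it into two parts of sizes ⌈|A|/4⌉ and ⌊3|A|/4⌋. Then after every step the resulting partition P satisfies max_{A ∈ P} |A| ≤ 4 · min_{A ∈ P} |A|. Consequently, after s steps the maximum part size is at most 4n/(s+1). -/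
theorem stmt8 (n s : ℕ) (hn : 1 ≤ n) (P : ℕ → Multiset ℕ)
    (h0 : P 0 = {n})
    (hstep : ∀ i < s, ∃ a ∈ P i, 2 ≤ a ∧ (∀ b ∈ P i, b ≤ a) ∧
      P (i + 1) = (a + 3) / 4 ::ₘ 3 * a / 4 ::ₘ (P i).erase a) :
    (∀ i ≤ s, ∀ x ∈ P i, ∀ y ∈ P i, x ≤ 4 * y) ∧
    (∀ x ∈ P s, x * (s + 1) ≤ 4 * n) := by
  have inv : ∀ i ≤ s, (P i).sum = n ∧ Multiset.card (P i) = i + 1 ∧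
      (∀ x ∈ P i, ∀ y ∈ P i, x ≤ 4 * y) := by
    intro i hi
    induction i with
    | zero =>
      rw [h0]
      refine ⟨by simp, by simp, ?_⟩
      intro x hx y hy
      simp only [Multiset.mem_singleton] at hx hy
      omega
    | succ j ih =>
      obtain ⟨hsum, hcard, hinv⟩ := ih (by omega)
      obtain ⟨a, ha, ha2, hmax, heq⟩ := hstep j (by omega)
      have hcons : a ::ₘ (P j).erase a = P j := Multiset.cons_erase ha
      have hsplit : (a + 3) / 4 + 3 * a / 4 = a := by omega
      have hmem : ∀ x ∈ P (j + 1), x ≤ a ∧ a ≤ 4 * x := by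
        intro x hx
        rw [heq] at hx
        simp only [Multiset.mem_cons] at hx
        rcases hx with h | h | h
        · omega
        · omega
        · have hx' : x ∈ P j := Multiset.mem_of_mem_erase h
          exact ⟨hmax x hx', hinv a ha x hx'⟩
      refine ⟨?_, ?_, ?_⟩
      · have := congrArg Multiset.sum heq
        rw [Multiset.sum_cons, Multiset.sum_cons] at this
        have h2 := congrArg Multiset.sum hcons
        rw [Multiset.sum_cons] at h2
        omega
      · have := congrArg Multiset.card heq
        rw [Multiset.card_cons, Multiset.card_cons] at this
        have h2 := congrArg Multiset.card hcons
        rw [Multiset.card_cons] at h2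
        omega
      · intro x hx y hy
        obtain ⟨hx1, _⟩ := hmem x hx
        obtain ⟨_, hy1⟩ := hmem y hy
        omega
  refine ⟨fun i hi => (inv i hi).2.2, ?_⟩
  intro x hx
  obtain ⟨hsum, hcard, hinv⟩ := inv s le_rfl
  have key : Multiset.card ((P s).map (fun y => 4 * y)) • x ≤
      ((P s).map (fun y => 4 * y)).sum := by
    apply Multiset.card_nsmul_le_sum
    intro z hz
    obtain ⟨y, hy, rfl⟩ := Multiset.mem_map.mp hz
    exact hinv x hx y hy
  rw [Multiset.card_map, hcard, smul_eq_mul, mul_comm] at key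
  have hms : ((P s).map (fun y => 4 * y)).sum = 4 * n := by
    rw [Multiset.sum_map_mul_left]
    simp [hsum]
  omega
end

section
/- Let G be a graph on N vertices with the property that every induced subgraph on at least m vertices contains an independent set of size at least a (1/D)-fraction of its vertices, where D ≥ 1 and m ≤ N. Then χ(G) ≤ D·ln(N/m) + m + 1. -/
open Finset

private lemma aux13 {V : Type*} [Fintype V] [DecidableEq V] (G : SimpleGraph V) (m : ℕ)
    (hm1 : 1 ≤ m) (D : ℝ) (hD : 1 ≤ D)
    (hind : ∀ W : Finset V, m ≤ W.card →
      ∃ S ⊆ W, (∀ u ∈ S, ∀ v ∈ S, ¬ G.Adj u v) ∧ (W.card : ℝ) ≤ D * S.card) :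
    ∀ n (A : Finset V), A.card ≤ n →
      ∃ (c : ℕ) (f : V → ℕ), (∀ v ∈ A, f v < c) ∧
        (∀ u ∈ A, ∀ v ∈ A, G.Adj u v → f u ≠ f v) ∧
        (A.card ≤ m → c ≤ A.card) ∧
        (m ≤ A.card → (c : ℝ) ≤ D * Real.log ((A.card : ℝ) / m) + m + 1) := by
  intro n
  induction n with
  | zero =>
    intro A hA
    have hA0 : A = ∅ := Finset.card_eq_zero.mp (Nat.le_zero.mp hA)
    refine ⟨0, fun _ => 0, ?_, ?_, ?_, ?_⟩ <;> simp [hA0] <;> omega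
  | succ n ih =>
    intro A hA
    by_cases h : A.card ≤ m
    · -- trivial coloring: each vertex its own color
      refine ⟨A.card, fun v => if hv : v ∈ A then ((Fintype.equivFin A ⟨v, hv⟩ : Fin _) : ℕ) else 0,
        ?_, ?_, fun _ => le_refl _, ?_⟩
      · intro v hv
        simp only [hv, dif_pos]
        have := (Fintype.equivFin A ⟨v, hv⟩).isLt
        simpa [Fintype.card_coe] using this
      · intro u hu v hv hadj
        simp only [hu, hv, dif_pos]
        intro heq
        have : (⟨u, hu⟩ : A) = ⟨v, hv⟩ := (Fintype.equivFin A).injective (Fin.ext heq)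
        exact G.ne_of_adj hadj (by simpa using congrArg Subtype.val this)
      · intro hmA
        have hAm : A.card = m := le_antisymm h hmA
        have hm0 : (0:ℝ) < m := by exact_mod_cast hm1
        have : Real.log ((A.card : ℝ) / m) = 0 := by
          rw [hAm, div_self (ne_of_gt hm0), Real.log_one]
        rw [this]
        push_cast [hAm]
        nlinarith
    · push_neg at h
      have hmA : m ≤ A.card := le_of_lt h
      obtain ⟨S, hS, hSind, hScard⟩ := hind A hmA
      have hm0 : (0:ℝ) < m := by exact_mod_cast hm1
      have hD0 : (0:ℝ) < D := lt_of_lt_of_le one_pos hD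
      have hA0 : (0:ℝ) < A.card := lt_of_lt_of_le hm0 (by exact_mod_cast hmA)
      have hSpos : 1 ≤ S.card := by
        by_contra hc
        push_neg at hc
        have hz : S.card = 0 := by omega
        rw [hz] at hScard
        norm_num at hScard
        simp [hScard] at h
      set A' := A \ S with hA'
      have hcardA' : A'.card = A.card - S.card := Finset.card_sdiff_of_subset hS
      have hSA : S.card ≤ A.card := Finset.card_le_card hS
      have hA'lt : A'.card < A.card := by omega
      have hA'n : A'.card ≤ n := by omega
      obtain ⟨c', f', hlt, hproper, hsmall, hbig⟩ := ih A' hA'n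
      refine ⟨c' + 1, fun v => if v ∈ S then c' else f' v, ?_, ?_, ?_, ?_⟩
      · intro v hv
        by_cases hvS : v ∈ S
        · simp [hvS]
        · simp only [hvS, if_neg, ite_false]
          exact Nat.lt_succ_of_lt (hlt v (Finset.mem_sdiff.mpr ⟨hv, hvS⟩))
      · intro u hu v hv hadj
        by_cases huS : u ∈ S <;> by_cases hvS : v ∈ S
        · exact absurd hadj (hSind u huS v hvS)
        · simp only [huS, hvS, if_pos, if_neg, ite_true, ite_false]
          exact fun heq => absurd heq.symm (Nat.ne_of_lt (hlt v (Finset.mem_sdiff.mpr ⟨hv, hvS⟩)))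
        · simp only [huS, hvS, if_pos, if_neg, ite_true, ite_false]
          exact Nat.ne_of_lt (hlt u (Finset.mem_sdiff.mpr ⟨hu, huS⟩))
        · simp only [huS, hvS, ite_false]
          exact hproper u (Finset.mem_sdiff.mpr ⟨hu, huS⟩) v (Finset.mem_sdiff.mpr ⟨hv, hvS⟩) hadj
      · intro hle; omega
      · intro _
        have hlog0 : 0 ≤ Real.log ((A.card : ℝ) / m) :=
          Real.log_nonneg (by rw [le_div_iff₀ hm0]; exact_mod_cast by linarith [hmA])
        by_cases hmA' : m ≤ A'.card
        · have hb := hbig hmA'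
          -- key inequality
          have hb0 : (0:ℝ) < A'.card := lt_of_lt_of_le hm0 (by exact_mod_cast hmA')
          have hcast : (A'.card : ℝ) = (A.card : ℝ) - S.card := by
            rw [hcardA']; push_cast [Nat.cast_sub hSA]; ring
          have hsge : (A.card : ℝ) / D ≤ S.card := by
            rw [div_le_iff₀ hD0]; linarith [hScard, mul_comm D (S.card : ℝ)]
          have hba : (A'.card : ℝ) / A.card ≤ 1 - 1 / D := by
            rw [div_le_iff₀ hA0, hcast]
            have h1 : (1 - 1/D) * (A.card : ℝ) = A.card - A.card / D := by ring
            linarith [hsge]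
          have hexp : (1:ℝ) - 1/D ≤ Real.exp (-(1/D)) := by
            have := Real.add_one_le_exp (-(1/D))
            linarith
          have hba0 : (0:ℝ) < (A'.card : ℝ) / A.card := div_pos hb0 hA0
          have hlogba : Real.log ((A'.card : ℝ) / A.card) ≤ -(1/D) := by
            calc Real.log ((A'.card : ℝ) / A.card) ≤ Real.log (Real.exp (-(1/D))) :=
                  Real.log_le_log hba0 (le_trans hba hexp)
              _ = -(1/D) := Real.log_exp _
          have hlogdiff : 1/D ≤ Real.log (A.card : ℝ) - Real.log (A'.card : ℝ) := by
            rw [Real.log_div (ne_of_gt hb0) (ne_of_gt hA0)] at hlogba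
            linarith
          have hkey : 1 + D * Real.log ((A'.card : ℝ) / m) ≤ D * Real.log ((A.card : ℝ) / m) := by
            rw [Real.log_div (ne_of_gt hb0) (ne_of_gt hm0),
              Real.log_div (ne_of_gt hA0) (ne_of_gt hm0)]
            have : D * (1/D) ≤ D * (Real.log (A.card : ℝ) - Real.log (A'.card : ℝ)) :=
              mul_le_mul_of_nonneg_left hlogdiff (le_of_lt hD0)
            rw [mul_one_div, div_self (ne_of_gt hD0)] at this
            nlinarith
          push_cast
          linarith
        · push_neg at hmA'
          have := hsmall (le_of_lt hmA')
          have hc'm : (c' : ℝ) ≤ m := by exact_mod_cast le_trans this (le_of_lt hmA')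
          push_cast
          nlinarith

theorem stmt13 {V : Type*} [Fintype V] (G : SimpleGraph V) (N m : ℕ)
    (hN : Fintype.card V = N) (hm1 : 1 ≤ m) (hmN : m ≤ N) (D : ℝ) (hD : 1 ≤ D)
    (hind : ∀ W : Finset V, m ≤ W.card →
      ∃ S ⊆ W, (∀ u ∈ S, ∀ v ∈ S, ¬ G.Adj u v) ∧ (W.card : ℝ) ≤ D * S.card) :
    ∃ c : ℕ, G.Colorable c ∧ (c : ℝ) ≤ D * Real.log ((N : ℝ) / m) + m + 1 := by
  classical
  obtain ⟨c, f, hlt, hproper, _, hbound⟩ :=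
    aux13 G m hm1 D hD hind (Finset.univ.card) Finset.univ (le_refl _)
  have hcardu : (Finset.univ : Finset V).card = N := by rw [Finset.card_univ, hN]
  refine ⟨c, ?_, ?_⟩
  · exact ⟨SimpleGraph.Coloring.mk (fun v => (⟨f v, hlt v (Finset.mem_univ v)⟩ : Fin c))
      (fun {u v} hadj heq => hproper u (Finset.mem_univ u) v (Finset.mem_univ v) hadj
        (by simpa using congrArg Fin.val heq))⟩
  · have := hbound (by rw [hcardu]; exact hmN)
    rwa [hcardu] at this
end

section
/- Let n = q² and consider the tournament on vertex set {1,...,n} where, for i < j, the edge is oriented from i to j unless q divides j - i, in which case it is oriented from j to i. In this tournament, for any set S of vertices that induces a transitive subtournament, |S| ≤ 2q - 1. -/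
theorem stmt16 (q : ℕ) (hq : 1 ≤ q) (r : Fin (q ^ 2) → Fin (q ^ 2) → Prop)
    (hr : ∀ i j, r i j ↔
      (((i : ℕ) < j ∧ ¬ q ∣ (j : ℕ) - i) ∨ ((j : ℕ) < i ∧ q ∣ (i : ℕ) - j)))
    (S : Finset (Fin (q ^ 2)))
    (htrans : ∀ v, ¬ Relation.TransGen (fun a b => a ∈ S ∧ b ∈ S ∧ r a b) v v) :
    S.card ≤ 2 * q - 1 := by
  classical
  -- no 3-cycle: if a < c < b in S with a ≡ b mod q, then a ≡ c mod q
  have key : ∀ a b c : Fin (q ^ 2), a ∈ S → b ∈ S → c ∈ S →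
      (a : ℕ) < c → (c : ℕ) < b → (a : ℕ) ≡ (b : ℕ) [MOD q] →
      (a : ℕ) ≡ (c : ℕ) [MOD q] := by
    intro a b c ha hb hc hac hcb hab
    by_contra hnac
    have hncb : ¬ (c : ℕ) ≡ (b : ℕ) [MOD q] := fun h => hnac (hab.trans h.symm)
    have h1 : r a c := (hr a c).2
      (Or.inl ⟨hac, fun hd => hnac ((Nat.modEq_iff_dvd' hac.le).2 hd)⟩)
    have h2 : r c b := (hr c b).2
      (Or.inl ⟨hcb, fun hd => hncb ((Nat.modEq_iff_dvd' hcb.le).2 hd)⟩)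
    have h3 : r b a := (hr b a).2
      (Or.inr ⟨hac.trans hcb, (Nat.modEq_iff_dvd' (hac.trans hcb).le).1 hab⟩)
    exact htrans a
      (((Relation.TransGen.single ⟨ha, hc, h1⟩).tail ⟨hc, hb, h2⟩).tail ⟨hb, ha, h3⟩)
  rcases Nat.eq_zero_or_pos S.card with h0 | hpos
  · omega
  obtain ⟨m, hm⟩ : ∃ m, S.card = m + 1 := ⟨S.card - 1, by omega⟩
  set e := S.orderEmbOfFin hm with he
  set xn : ℕ → ℕ := fun j => ((e ⟨min j m, by omega⟩ : Fin (q ^ 2)) : ℕ) with hxn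
  have hmono : ∀ i j : ℕ, i < j → j ≤ m → xn i < xn j := by
    intro i j hij hjm
    have : e ⟨min i m, by omega⟩ < e ⟨min j m, by omega⟩ := by
      apply e.strictMono
      simp only [Fin.mk_lt_mk]
      omega
    exact this
  have hmem : ∀ j : ℕ, e ⟨min j m, by omega⟩ ∈ S := fun j => S.orderEmbOfFin_mem hm _
  have hlt : ∀ j : ℕ, xn j < q ^ 2 := fun j => (e ⟨min j m, by omega⟩).isLt
  -- if i < t and xn i ≡ xn (t+1), then xn t ≡ xn (t+1)
  have keyZ : ∀ i t : ℕ, i < t → t + 1 ≤ m → xn i ≡ xn (t + 1) [MOD q] →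
      xn t ≡ xn (t + 1) [MOD q] := by
    intro i t hit htm hcong
    have h1 := key (e ⟨min i m, by omega⟩) (e ⟨min (t+1) m, by omega⟩)
      (e ⟨min t m, by omega⟩) (hmem i) (hmem (t+1)) (hmem t)
      (hmono i t hit (by omega)) (hmono t (t+1) (by omega) htm) hcong
    exact h1.symm.trans hcong
  set A : Finset ℕ := (Finset.range m).filter (fun i => xn i ≡ xn (i + 1) [MOD q]) with hA
  set B : Finset ℕ := (Finset.range m).filter (fun i => ¬ xn i ≡ xn (i + 1) [MOD q]) with hB
  have hcards : A.card + B.card = m := by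
    rw [hA, hB]
    rw [Finset.card_filter_add_card_filter_not, Finset.card_range]
  set x : ℕ → ℤ := fun j => (xn j : ℤ) with hx
  have hsum : ∑ i ∈ Finset.range m, (x (i + 1) - x i) = x m - x 0 :=
    Finset.sum_range_sub x m
  have hsplit : ∑ i ∈ A, (x (i + 1) - x i) + ∑ i ∈ B, (x (i + 1) - x i)
      = ∑ i ∈ Finset.range m, (x (i + 1) - x i) := by
    rw [hA, hB]
    exact Finset.sum_filter_add_sum_filter_not _ _ _
  have hAge : (q : ℤ) * A.card ≤ ∑ i ∈ A, (x (i + 1) - x i) := by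
    have : ∀ i ∈ A, (q : ℤ) ≤ x (i + 1) - x i := by
      intro i hi
      rw [hA, Finset.mem_filter, Finset.mem_range] at hi
      have hdvd : (q : ℤ) ∣ x (i + 1) - x i := hi.2.dvd
      have hpos : 0 < x (i + 1) - x i := by
        have := hmono i (i + 1) (by omega) (by omega)
        simp only [hx]
        omega
      exact Int.le_of_dvd hpos hdvd
    calc (q : ℤ) * A.card = ∑ _i ∈ A, (q : ℤ) := by
          rw [Finset.sum_const, nsmul_eq_mul, mul_comm]
      _ ≤ _ := Finset.sum_le_sum this
  have hBge : (B.card : ℤ) ≤ ∑ i ∈ B, (x (i + 1) - x i) := by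
    have : ∀ i ∈ B, (1 : ℤ) ≤ x (i + 1) - x i := by
      intro i hi
      rw [hB, Finset.mem_filter, Finset.mem_range] at hi
      have := hmono i (i + 1) (by omega) (by omega)
      simp only [hx]
      omega
    calc (B.card : ℤ) = ∑ _i ∈ B, (1 : ℤ) := by rw [Finset.sum_const, nsmul_eq_mul, mul_one]
      _ ≤ _ := Finset.sum_le_sum this
  have hxtop : x m - x 0 ≤ (q : ℤ) ^ 2 - 1 := by
    have h1 : (xn m : ℤ) < (q : ℤ) ^ 2 := by exact_mod_cast hlt m
    have h2 : (0 : ℤ) ≤ (xn 0 : ℤ) := Int.natCast_nonneg _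
    simp only [hx]
    omega
  have hmain : (q : ℤ) * A.card + B.card ≤ (q : ℤ) ^ 2 - 1 := by
    calc (q : ℤ) * A.card + B.card
        ≤ ∑ i ∈ A, (x (i + 1) - x i) + ∑ i ∈ B, (x (i + 1) - x i) := add_le_add hAge hBge
      _ = x m - x 0 := by rw [hsplit, hsum]
      _ ≤ (q : ℤ) ^ 2 - 1 := hxtop
  -- |B| ≤ q - 1 via injection into residues other than that of xn 0
  have hBcard : B.card ≤ q - 1 := by
    have hcard : ((Finset.range q).erase (xn 0 % q)).card = q - 1 := by
      rw [Finset.card_erase_of_mem (Finset.mem_range.2 (Nat.mod_lt _ hq)),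
        Finset.card_range]
    rw [← hcard]
    apply Finset.card_le_card_of_injOn (fun i => xn (i + 1) % q)
    · intro i hi
      rw [hB, Finset.mem_coe, Finset.mem_filter, Finset.mem_range] at hi
      apply Finset.mem_erase.2
      constructor
      · intro hcontra
        have hcong : xn 0 ≡ xn (i + 1) [MOD q] := hcontra.symm
        rcases Nat.eq_zero_or_pos i with hi0 | hipos
        · subst hi0; exact hi.2 hcong
        · exact hi.2 (keyZ 0 i hipos (by omega) hcong)
      · exact Finset.mem_range.2 (Nat.mod_lt _ hq)
    · intro i hi j hj hfij
      rw [hB, Finset.coe_filter, Set.mem_setOf_eq, Finset.mem_range] at hi hj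
      by_contra hne
      rcases Nat.lt_or_ge i j with hij | hij
      · have hcong : xn (i + 1) ≡ xn (j + 1) [MOD q] := hfij
        rcases Nat.lt_or_ge (i + 1) j with h | h
        · exact hj.2 (keyZ (i + 1) j h (by omega) hcong)
        · have : i + 1 = j := by omega
          rw [this] at hcong
          exact hj.2 hcong
      · have hji : j < i := by omega
        have hcong : xn (j + 1) ≡ xn (i + 1) [MOD q] := hfij.symm
        rcases Nat.lt_or_ge (j + 1) i with h | h
        · exact hi.2 (keyZ (j + 1) i h (by omega) hcong)
        · have : j + 1 = i := by omega
          rw [this] at hcong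
          exact hi.2 hcong
  -- |A| ≤ q - 1
  have hAcard : A.card ≤ q - 1 := by
    by_contra hcontra
    have hAq : q ≤ A.card := by omega
    have : (q : ℤ) * q ≤ (q : ℤ) * A.card := by
      apply mul_le_mul_of_nonneg_left _ (by positivity)
      exact_mod_cast hAq
    have hB0 : (0 : ℤ) ≤ B.card := Int.natCast_nonneg _
    nlinarith [hmain]
  omega
end

section
/- Let G be an n-vertex tournament with an ordering ρ such that every vertex has at most q incident edges oriented backwards according to ρ (i.e., G is q-almost-transitive). Partition the vertices into s contiguous blocks A_1,...,A_s (according to ρ) of size n/s each. For any ordering π that permutes vertices only within each block, if S is an independent set in the forward graph G_π and v is the π-first vertex of S lying in block A_i, then S ⊆ A_i ∪ B(v), where B(v) is the set of vertices joined to v by a backward edge under ρ. -/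
theorem stmt18 (n s q : ℕ) (hs : 1 ≤ s) (hdvd : s ∣ n)
    (r : Fin n → Fin n → Prop)
    (hirr : ∀ v, ¬ r v v) (htour : ∀ u v, u ≠ v → (r u v ↔ ¬ r v u))
    (ρ : Equiv.Perm (Fin n))
    (Bset : Fin n → Set (Fin n))
    (hB : ∀ v w, w ∈ Bset v ↔
      (((ρ v : ℕ) < (ρ w : ℕ) ∧ r w v) ∨ ((ρ w : ℕ) < (ρ v : ℕ) ∧ r v w)))
    (hq : ∀ v, Nat.card (Bset v) ≤ q)
    (π : Equiv.Perm (Fin n))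
    (hπ : ∀ v, (π v : ℕ) / (n / s) = (ρ v : ℕ) / (n / s))
    (S : Finset (Fin n))
    (hS : ∀ u ∈ S, ∀ w ∈ S, (π u : ℕ) < (π w : ℕ) → ¬ r u w)
    (v : Fin n) (hv : v ∈ S) (hfirst : ∀ u ∈ S, (π v : ℕ) ≤ (π u : ℕ)) :
    ∀ u ∈ S, (ρ u : ℕ) / (n / s) = (ρ v : ℕ) / (n / s) ∨ u ∈ Bset v := by
  intro u hu
  by_cases huv : u = v
  · left; rw [huv]
  · have hlt : (π v : ℕ) < (π u : ℕ) := by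
      rcases lt_or_eq_of_le (hfirst u hu) with h | h
      · exact h
      · exact absurd (π.injective (Fin.ext h)) (Ne.symm huv)
    have hnrv : ¬ r v u := hS v hv u hu hlt
    have hruv : r u v := (htour u v huv).mpr hnrv
    rcases lt_trichotomy ((ρ v : ℕ)) ((ρ u : ℕ)) with h | h | h
    · right; exact (hB v u).mpr (Or.inl ⟨h, hruv⟩)
    · exact absurd (ρ.injective (Fin.ext h)) (Ne.symm huv)
    · left
      have h1 : (ρ u : ℕ) / (n / s) ≤ (ρ v : ℕ) / (n / s) :=
        Nat.div_le_div_right h.le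
      have h2 : (ρ v : ℕ) / (n / s) ≤ (ρ u : ℕ) / (n / s) := by
        rw [← hπ u, ← hπ v]; exact Nat.div_le_div_right hlt.le
      exact le_antisymm h1 h2
end

section
/- Let H be a bipartite vertex-line incidence graph as follows: A has k(t²-t+1) vertices in buckets of size k indexed by points of a projective plane of order t-1, B is the set of t²-t+1 lines, and v ∈ A is adjacent to ℓ ∈ B iff the point of v's bucket lies on ℓ. Then for every set X ⊆ A with |X| ≥ 9kt, at most t²/2 lines ℓ ∈ B have fewer than |X|/(2t) neighbours in X. -/
/-!
Second-moment form of the expander mixing lemma. Let `x p` be the number of vertices of `X` in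
the bucket of `p` and `e l = ∑_{p ∈ l} x p`. As every point lies on `t` lines and two distinct
points on exactly one, `∑ e l = t |X|` and
`∑ (e l)² = |X|² + (t - 1) ∑ (x p)² ≤ |X|² + (t - 1) k |X|`.
With at most `t²` lines this gives `∑ (t e l - |X|)² ≤ t² (t - 1) k |X|`, while every line with
`2 t e l < |X|` contributes more than `|X|² / 4`. Hence there are at most `4 t² (t - 1) k / |X|`
such lines, which is below `t² / 2` once `|X| ≥ 9 k t`.
-/

open Finset

section Incidence

variable {Pt Ln : Type*} [Fintype Ln] {mem : Pt → Ln → Prop}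
  [∀ p l, Decidable (mem p l)] {t : ℕ}

theorem card_lines_through_pair [DecidableEq Pt] (hpoint : ∀ p, #{l | mem p l} = t)
    (htwo : ∀ p p' : Pt, p ≠ p' → ∃! l, mem p l ∧ mem p' l) (p q : Pt) :
    #{l | mem p l ∧ mem q l} = if p = q then t else 1 := by
  split_ifs with h
  · subst h
    simpa only [and_self] using hpoint p
  · obtain ⟨l, hl, hu⟩ := htwo p q h
    rw [card_eq_one]
    refine ⟨l, ext fun l' => ?_⟩
    simp only [mem_filter, mem_univ, true_and, mem_singleton]
    exact ⟨hu l', fun h' => h' ▸ hl⟩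

variable [Fintype Pt] {R : Type*} [CommRing R]

theorem sum_sum_filter_mem_eq (hpoint : ∀ p, #{l | mem p l} = t) (x : Pt → R) :
    ∑ l, ∑ p with mem p l, x p = t * ∑ p, x p := by
  simp_rw [sum_filter]
  rw [sum_comm]
  simp_rw [← sum_filter, sum_const, hpoint, nsmul_eq_mul, mul_sum]

theorem sum_sq_sum_filter_mem_eq [DecidableEq Pt] (hpoint : ∀ p, #{l | mem p l} = t)
    (htwo : ∀ p p' : Pt, p ≠ p' → ∃! l, mem p l ∧ mem p' l) (x : Pt → R) :
    ∑ l, (∑ p with mem p l, x p) ^ 2 = (∑ p, x p) ^ 2 + (t - 1) * ∑ p, x p ^ 2 := by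
  have hpair : ∀ p q, ∑ l, (if mem p l ∧ mem q l then x p * x q else 0)
      = x p * x q + if p = q then (t - 1) * x p ^ 2 else 0 := by
    intro p q
    rw [← sum_filter, sum_const, card_lines_through_pair hpoint htwo, nsmul_eq_mul]
    split_ifs with h
    · subst h; ring
    · simp
  calc ∑ l, (∑ p with mem p l, x p) ^ 2
      = ∑ p, ∑ q, ∑ l, if mem p l ∧ mem q l then x p * x q else 0 := by
        simp_rw [sq, sum_filter, sum_mul_sum, ite_zero_mul_ite_zero]
        rw [sum_comm]
        exact sum_congr rfl fun p _ => sum_comm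
    _ = (∑ p, x p) ^ 2 + (t - 1) * ∑ p, x p ^ 2 := by
        simp_rw [hpair, sum_add_distrib, sum_ite_eq, mem_univ, if_true, sq, sum_mul_sum, mul_sum]

variable [LinearOrder R] [IsStrictOrderedRing R]

theorem sum_sq_mul_sum_filter_mem_sub_le [DecidableEq Pt] (hpoint : ∀ p, #{l | mem p l} = t)
    (htwo : ∀ p p' : Pt, p ≠ p' → ∃! l, mem p l ∧ mem p' l) (hLn : Fintype.card Ln ≤ t ^ 2)
    (x : Pt → R) :
    ∑ l, (t * ∑ p with mem p l, x p - ∑ p, x p) ^ 2 ≤ t ^ 2 * (t - 1) * ∑ p, x p ^ 2 := by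
  have hexpand : ∑ l, (t * ∑ p with mem p l, x p - ∑ p, x p) ^ 2
      = t ^ 2 * ∑ l, (∑ p with mem p l, x p) ^ 2
        - 2 * t * (∑ p, x p) * ∑ l, ∑ p with mem p l, x p + Fintype.card Ln * (∑ p, x p) ^ 2 := by
    simp only [sub_sq, sum_add_distrib, sum_sub_distrib, mul_pow, ← mul_sum, ← sum_mul, sum_const,
      card_univ, nsmul_eq_mul]
    ring
  have hLnR : (Fintype.card Ln : R) ≤ t ^ 2 := by exact_mod_cast hLn
  rw [hexpand, sum_sq_sum_filter_mem_eq hpoint htwo, sum_sum_filter_mem_eq hpoint]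
  nlinarith [sq_nonneg (∑ p, x p)]

theorem card_mul_sq_le_of_two_mul_sum_filter_mem_lt [DecidableEq Pt]
    (hpoint : ∀ p, #{l | mem p l} = t) (htwo : ∀ p p' : Pt, p ≠ p' → ∃! l, mem p l ∧ mem p' l)
    (hLn : Fintype.card Ln ≤ t ^ 2) (x : Pt → R) (hx : 0 ≤ ∑ p, x p) (s : Finset Ln)
    (hs : ∀ l ∈ s, 2 * t * ∑ p with mem p l, x p < ∑ p, x p) :
    #s * (∑ p, x p) ^ 2 ≤ 4 * (t ^ 2 * (t - 1) * ∑ p, x p ^ 2) := by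
  set m := ∑ p, x p
  calc #s * m ^ 2 = ∑ l ∈ s, m ^ 2 := by rw [sum_const, nsmul_eq_mul]
    _ ≤ ∑ l ∈ s, 4 * (t * ∑ p with mem p l, x p - m) ^ 2 :=
        sum_le_sum fun l hl => by nlinarith [hs l hl]
    _ ≤ ∑ l, 4 * (t * ∑ p with mem p l, x p - m) ^ 2 :=
        sum_le_sum_of_subset_of_nonneg (subset_univ _) fun _ _ _ => by positivity
    _ ≤ 4 * (t ^ 2 * (t - 1) * ∑ p, x p ^ 2) := by
        rw [← mul_sum]
        exact mul_le_mul_of_nonneg_left (sum_sq_mul_sum_filter_mem_sub_le hpoint htwo hLn x)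
          (by norm_num)

end Incidence

theorem sum_sq_le_mul_sum {ι R : Type*} [CommRing R] [LinearOrder R] [IsStrictOrderedRing R]
    (s : Finset ι) {f : ι → R} {k : R} (h0 : ∀ i ∈ s, 0 ≤ f i) (hk : ∀ i ∈ s, f i ≤ k) :
    ∑ i ∈ s, f i ^ 2 ≤ k * ∑ i ∈ s, f i := by
  rw [mul_sum]
  exact sum_le_sum fun i hi => by rw [sq]; exact mul_le_mul_of_nonneg_right (hk i hi) (h0 i hi)

theorem card_filter_snd_eq_le {α β : Type*} [Fintype α] [DecidableEq β] (X : Finset (α × β))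
    (b : β) : #{v ∈ X | v.2 = b} ≤ Fintype.card α := by
  calc #{v ∈ X | v.2 = b} ≤ #(univ ×ˢ {b}) :=
        card_le_card fun v hv =>
          mem_product.mpr ⟨mem_univ _, mem_singleton.mpr (mem_filter.mp hv).2⟩
    _ = Fintype.card α := by simp

theorem card_sparse_lines_mul_sq_le {α Pt Ln : Type*} [Fintype α] [Fintype Pt]
    [Fintype Ln] {mem : Pt → Ln → Prop} [∀ p l, Decidable (mem p l)] {t : ℕ} (ht : 1 ≤ t)
    (hpoint : ∀ p, #{l | mem p l} = t) (htwo : ∀ p p' : Pt, p ≠ p' → ∃! l, mem p l ∧ mem p' l)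
    (hLn : Fintype.card Ln ≤ t ^ 2) (X : Finset (α × Pt)) :
    (#{l | 2 * t * #{v ∈ X | mem v.2 l} < #X} : ℤ) * #X ^ 2
      ≤ 4 * t ^ 2 * (t - 1) * (Fintype.card α * #X) := by
  classical
  set x : Pt → ℤ := fun p => #{v ∈ X | v.2 = p}
  have hX : (#X : ℤ) = ∑ p, x p := by
    simp only [x]
    exact_mod_cast card_eq_sum_card_fiberwise (s := X) (f := Prod.snd) fun v _ => mem_univ v.2
  have hline : ∀ l, (#{v ∈ X | mem v.2 l} : ℤ) = ∑ p with mem p l, x p := fun l => by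
    have := sum_card_fiberwise_eq_card_filter X {p | mem p l} Prod.snd
    simp only [mem_filter, mem_univ, true_and] at this
    simp only [x]
    exact_mod_cast this.symm
  have hsq : ∑ p, x p ^ 2 ≤ Fintype.card α * #X := by
    rw [hX]
    exact sum_sq_le_mul_sum _ (fun p _ => by positivity)
      fun p _ => show ((_ : ℕ) : ℤ) ≤ _ by exact_mod_cast card_filter_snd_eq_le X p
  have hY := card_mul_sq_le_of_two_mul_sum_filter_mem_lt hpoint htwo hLn x (hX ▸ by positivity)
    {l | 2 * t * #{v ∈ X | mem v.2 l} < #X} fun l hl => by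
      rw [← hline, ← hX]
      exact_mod_cast (mem_filter.mp hl).2
  rw [← hX] at hY
  have ht1 : (0 : ℤ) ≤ 4 * t ^ 2 * (t - 1) :=
    mul_nonneg (by positivity) (sub_nonneg.mpr (by exact_mod_cast ht))
  calc _ ≤ 4 * (t ^ 2 * (t - 1) * ∑ p, x p ^ 2 : ℤ) := hY
    _ ≤ 4 * t ^ 2 * (t - 1) * (Fintype.card α * #X) := by
        linarith [mul_le_mul_of_nonneg_left hsq ht1]

theorem stmt19_general {Pt Ln : Type*} [Fintype Pt] [Fintype Ln]
    (t k : ℕ) (ht : 2 ≤ t) (mem : Pt → Ln → Prop) [∀ p l, Decidable (mem p l)]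
    (hL : Fintype.card Ln = t ^ 2 - t + 1)
    (hpoint : ∀ p, (univ.filter fun l => mem p l).card = t)
    (htwo : ∀ p p' : Pt, p ≠ p' → ∃! l, mem p l ∧ mem p' l)
    (X : Finset (Fin k × Pt)) (hX : 9 * k * t ≤ X.card) :
    2 * (univ.filter fun l : Ln =>
        2 * t * (X.filter fun v => mem v.2 l).card < X.card).card ≤ t ^ 2 := by
  rcases X.eq_empty_or_nonempty with rfl | ⟨v, hv⟩
  · simp
  have hLn : Fintype.card Ln ≤ t ^ 2 := by
    have := Nat.le_self_pow two_ne_zero t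
    omega
  have hY := card_sparse_lines_mul_sq_le (by omega) hpoint htwo hLn X
  rw [Fintype.card_fin] at hY
  set Y := #{l | 2 * t * #{v ∈ X | mem v.2 l} < #X}
  have hXY : (9 * k * t : ℤ) * (Y * #X) ≤ #X * (Y * #X) := by
    gcongr
    exact_mod_cast hX
  have h9 : (k * t * #X : ℤ) * (9 * Y) ≤ (k * t * #X : ℤ) * (4 * t * (t - 1)) := by
    linear_combination hXY + hY
  have hpos : (0 : ℤ) < k * t * #X := by
    have : 0 < k := v.1.pos
    have : 0 < #X := card_pos.mpr ⟨v, hv⟩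
    positivity
  have h9Y := le_of_mul_le_mul_left h9 hpos
  zify
  nlinarith

theorem stmt19 {Pt Ln : Type*} [Fintype Pt] [Fintype Ln] [DecidableEq Pt] [DecidableEq Ln]
    (t k : ℕ) (ht : 2 ≤ t) (hk : 1 ≤ k) (mem : Pt → Ln → Prop) [∀ p l, Decidable (mem p l)]
    (hP : Fintype.card Pt = t ^ 2 - t + 1) (hL : Fintype.card Ln = t ^ 2 - t + 1)
    (hline : ∀ l, (univ.filter fun p => mem p l).card = t)
    (hpoint : ∀ p, (univ.filter fun l => mem p l).card = t)
    (htwo : ∀ p p' : Pt, p ≠ p' → ∃! l, mem p l ∧ mem p' l)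
    (X : Finset (Fin k × Pt)) (hX : 9 * k * t ≤ X.card) :
    2 * (univ.filter fun l : Ln =>
        2 * t * (X.filter fun v => mem v.2 l).card < X.card).card ≤ t ^ 2 :=
  stmt19_general t k ht mem hL hpoint htwo X hX
end
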